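/- For G₂, with positive roots α₁, α₂, α₁+α₂, 2α₁+α₂, 3α₁+α₂, 3α₁+2α₂ where (α₁,α₁)=2/3, (α₂,α₂)=2, (α₁,α₂)=−1, the Weyl character formula for λ = n·(3α₁+2α₂) evaluated at xρ gives: [sinh((x/2)(n+1))/sinh(x/2)]·[sinh((x/2)(n+4/3))/sinh(2x/3)]·[sinh((x/2)(n+5/3))/sinh(5x/6)]·[sinh((x/2)(n+2))/sinh(x)]·[sinh((x/2)(2n+3))/sinh(3x/2)], and this agrees with the universal formula χₙ(x,−2,10/3,8/3) for all n ≥ 1 and all x where denominators are nonzero. -/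

import Mathlib

/-!
Write `s t = sinh (x t / 2)`. At `(α, β, γ) = (-2, 10/3, 8/3)` the `k`-th factor of `B` is
`s (k + 5/3) / s (k + 2/3) · s (k + 4/3) / s (k + 1/3) · s (k + 2) / s k`, so the product over
`k = 1, …, n` telescopes to the four Weyl factors `s (n + 5/3)`, `s (n + 4/3)`, `s (n + 1)`, `s (n + 2)`
over `s (5/3) s (4/3) s 1 s 2`; the prefactor of `χₙ` is the fifth one, `s (2n + 3) / s 3`.
-/

/-- Universal quantum dimension of the adjoint representation. -/
noncomputable def fAdj (x a b g : ℝ) : ℝ :=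
  -(Real.sinh ((g + 2*b + 2*a) * x / 4) * Real.sinh ((2*g + b + 2*a) * x / 4) *
      Real.sinh ((2*g + 2*b + a) * x / 4)) /
    (Real.sinh (g * x / 4) * Real.sinh (b * x / 4) * Real.sinh (a * x / 4))

/-- Contribution B(x,n,α,β,γ) of the roots with unit scalar product with θ. -/
noncomputable def Bfac (x : ℝ) (n : ℕ) (a b g : ℝ) : ℝ :=
  ∏ j ∈ Finset.range n,
    (Real.sinh ((g + 2*b - ((j:ℝ) + 1 - 3) * a) * x / 4) /
        Real.sinh ((g - ((j:ℝ) + 1 - 1) * a) * x / 4)) *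
    (Real.sinh ((2*g + b - ((j:ℝ) + 1 - 3) * a) * x / 4) /
        Real.sinh ((b - ((j:ℝ) + 1 - 1) * a) * x / 4)) *
    (Real.sinh ((2*g + 2*b - ((j:ℝ) + 1 - 4) * a) * x / 4) /
        Real.sinh (-((j:ℝ) + 1) * a * x / 4))

/-- Universal quantum dimension χₙ of the n-th Cartan power of the adjoint. -/
noncomputable def chiAdj (x : ℝ) (n : ℕ) (a b g : ℝ) : ℝ :=
  (Real.sinh ((2*g + 2*b - (2*(n:ℝ) - 3) * a) * x / 4) /
      Real.sinh ((2*g + 2*b + 3*a) * x / 4)) * Bfac x n a b g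

open Finset Real

theorem Finset.prod_range_div_of_ne_zero {G₀ : Type*} [CommGroupWithZero G₀] (f : ℕ → G₀)
    (hf : ∀ k, f k ≠ 0) (n : ℕ) : ∏ i ∈ range n, f (i + 1) / f i = f n / f 0 := by
  induction n with
  | zero => simp [hf 0]
  | succ n ih => rw [prod_range_succ, ih, mul_comm, div_mul_div_cancel₀ (hf n)]

theorem Finset.prod_range_div_two_of_ne_zero {G₀ : Type*} [CommGroupWithZero G₀] (f : ℕ → G₀)
    (hf : ∀ k, f k ≠ 0) (n : ℕ) :
    ∏ i ∈ range n, f (i + 2) / f i = f n * f (n + 1) / (f 0 * f 1) := by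
  have hsplit : ∀ i, f (i + 2) / f i = f (i + 1 + 1) / f (i + 1) * (f (i + 1) / f i) :=
    fun i ↦ (div_mul_div_cancel₀ (hf (i + 1))).symm
  rw [prod_congr rfl fun i _ ↦ hsplit i, prod_mul_distrib,
    prod_range_div_of_ne_zero (fun i ↦ f (i + 1)) (fun i ↦ hf _), prod_range_div_of_ne_zero f hf,
    div_mul_div_comm, mul_comm (f (n + 1)), zero_add, mul_comm (f 1)]

theorem Real.sinh_half_mul_ne_zero {x t : ℝ} (hx : x ≠ 0) (ht : t ≠ 0) : sinh (x / 2 * t) ≠ 0 :=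
  sinh_ne_zero.mpr (mul_ne_zero (div_ne_zero hx two_ne_zero) ht)

theorem prod_range_sinh_div {x : ℝ} (hx : x ≠ 0) {c : ℝ} (hc : 0 < c) (n : ℕ) :
    ∏ j ∈ range n, sinh (x / 2 * ((j : ℝ) + 1 + c)) / sinh (x / 2 * ((j : ℝ) + c)) =
      sinh (x / 2 * ((n : ℝ) + c)) / sinh (x / 2 * c) := by
  simpa using prod_range_div_of_ne_zero (fun j : ℕ ↦ sinh (x / 2 * ((j : ℝ) + c)))
    (fun j ↦ sinh_half_mul_ne_zero hx (by positivity)) n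

theorem prod_range_sinh_div_two {x : ℝ} (hx : x ≠ 0) {c : ℝ} (hc : 0 < c) (n : ℕ) :
    ∏ j ∈ range n, sinh (x / 2 * ((j : ℝ) + 2 + c)) / sinh (x / 2 * ((j : ℝ) + c)) =
      sinh (x / 2 * ((n : ℝ) + c)) * sinh (x / 2 * ((n : ℝ) + 1 + c)) /
        (sinh (x / 2 * c) * sinh (x / 2 * (1 + c))) := by
  simpa using prod_range_div_two_of_ne_zero (fun j : ℕ ↦ sinh (x / 2 * ((j : ℝ) + c)))
    (fun j ↦ sinh_half_mul_ne_zero hx (by positivity)) n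

theorem Bfac_G2_eq_prod (x : ℝ) (n : ℕ) :
    Bfac x n (-2) (10/3) (8/3) =
      ∏ j ∈ range n,
        sinh (x / 2 * ((j : ℝ) + 1 + 5/3)) / sinh (x / 2 * ((j : ℝ) + 5/3)) *
        (sinh (x / 2 * ((j : ℝ) + 1 + 4/3)) / sinh (x / 2 * ((j : ℝ) + 4/3))) *
        (sinh (x / 2 * ((j : ℝ) + 2 + 1)) / sinh (x / 2 * ((j : ℝ) + 1))) := by
  refine prod_congr rfl fun j _ ↦ ?_
  ring_nf

theorem Bfac_G2 {x : ℝ} (hx : x ≠ 0) (n : ℕ) :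
    Bfac x n (-2) (10/3) (8/3) =
      sinh (x / 2 * ((n : ℝ) + 5/3)) / sinh (x / 2 * (5/3)) *
      (sinh (x / 2 * ((n : ℝ) + 4/3)) / sinh (x / 2 * (4/3))) *
      (sinh (x / 2 * ((n : ℝ) + 1)) * sinh (x / 2 * ((n : ℝ) + 1 + 1)) /
        (sinh (x / 2 * 1) * sinh (x / 2 * (1 + 1)))) := by
  rw [Bfac_G2_eq_prod, prod_mul_distrib, prod_mul_distrib, prod_range_sinh_div hx (by norm_num),
    prod_range_sinh_div hx (by norm_num), prod_range_sinh_div_two hx one_pos]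

theorem stmt_15_general (n : ℕ) (x : ℝ) (hx : x ≠ 0) :
    (Real.sinh (x/2 * ((n:ℝ) + 1)) / Real.sinh (x/2)) *
    (Real.sinh (x/2 * ((n:ℝ) + 4/3)) / Real.sinh (2*x/3)) *
    (Real.sinh (x/2 * ((n:ℝ) + 5/3)) / Real.sinh (5*x/6)) *
    (Real.sinh (x/2 * ((n:ℝ) + 2)) / Real.sinh x) *
    (Real.sinh (x/2 * (2*(n:ℝ) + 3)) / Real.sinh (3*x/2)) =
      chiAdj x n (-2) (10/3) (8/3) := by
  rw [chiAdj, Bfac_G2 hx n]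
  ring_nf

/-- For G₂ the Weyl character formula for λ = n·(3α₁+2α₂) on the Weyl line
agrees with the universal formula χₙ(x,−2,10/3,8/3). -/
theorem stmt_15 (n : ℕ) (hn : 1 ≤ n) (x : ℝ) (hx : x ≠ 0) :
    (Real.sinh (x/2 * ((n:ℝ) + 1)) / Real.sinh (x/2)) *
    (Real.sinh (x/2 * ((n:ℝ) + 4/3)) / Real.sinh (2*x/3)) *
    (Real.sinh (x/2 * ((n:ℝ) + 5/3)) / Real.sinh (5*x/6)) *
    (Real.sinh (x/2 * ((n:ℝ) + 2)) / Real.sinh x) *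
    (Real.sinh (x/2 * (2*(n:ℝ) + 3)) / Real.sinh (3*x/2)) =
      chiAdj x n (-2) (10/3) (8/3) :=
  stmt_15_general n x hx
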